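/- Let g be a complex semisimple Lie algebra and V^λ a highest weight module with highest weight vector v_λ, and suppose J ⊆ I. Then U(g_J)·v_λ = U(g_{J_min ⊔ (J \ J(V^λ))})·v_λ, where J_min ⊆ J(V^λ) is the minimal subset with wt_{J_min ⊔ (J \ J(V^λ))} V^λ = wt_J V^λ. -/
import Mathlib


open scoped RealInnerProductSpace

/-- The `ℕ`-cone (additive submonoid) generated by the simple roots indexed by `J`,
i.e. `ℤ_{≥0} Δ_J`. -/
def nnCone {ι E : Type*} [AddCommMonoid E] (α : ι → E) (J : Set ι) : AddSubmonoid E :=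
  AddSubmonoid.closure (α '' J)

/-- The standard parabolic subset of weights `wt_J V^λ := (λ - ℤ_{≥0} Δ_J) ∩ wt V^λ`. -/
def wtJ {ι E : Type*} [AddCommGroup E] (α : ι → E) (lam : E) (wt : Set E) (J : Set ι) :
    Set E :=
  {μ ∈ wt | lam - μ ∈ nnCone α J}

/-- Iterated lowering-operator monomials applied to a vector. -/
def monom {ι V : Type*} [AddCommGroup V] [Module ℂ V] (F : ι → V →ₗ[ℂ] V) (v : V) :
    List ι → V
  | [] => v
  | i :: l => F i (monom F v l)

/-- An abstract axiomatization of a highest weight module over a complex semisimple Lie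
algebra, with simple roots `α : ι → E` (in the dual of the Cartan subalgebra), highest
weight `lam`, weight-space decomposition `wtSp`, lowering (Chevalley) operators `F i`
(for `x_{α_i}^-`), raising operators `Ep i` (for `x_{α_i}^+`), highest weight vector
`vlam`, and coroot pairing `κ μ i` (for `μ(h_i)`). -/
structure IsHWModule {ι E V : Type*} [AddCommGroup E] [AddCommGroup V] [Module ℂ V]
    (α : ι → E) (lam : E) (wtSp : E → Submodule ℂ V) (F Ep : ι → V →ₗ[ℂ] V)
    (vlam : V) (κ : E → ι → ℂ) : Prop where
  vlam_ne : vlam ≠ 0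
  vlam_mem : vlam ∈ wtSp lam
  F_wt : ∀ i μ, ∀ v ∈ wtSp μ, F i v ∈ wtSp (μ - α i)
  E_wt : ∀ i μ, ∀ v ∈ wtSp μ, Ep i v ∈ wtSp (μ + α i)
  hw : ∀ i, Ep i vlam = 0
  gen : Submodule.span ℂ (Set.range (monom F vlam)) = ⊤
  indep : ∀ μ ν : E, μ ≠ ν → ∀ v, v ∈ wtSp μ → v ∈ wtSp ν → v = 0
  sl2 : ∀ i μ, ∀ v ∈ wtSp μ, Ep i (F i v) = F i (Ep i v) + κ μ i • v
  offdiag : ∀ i j, i ≠ j → ∀ v : V, Ep i (F j v) = F j (Ep i v)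

/-- The set of weights of the module: those `μ` with nonzero weight space. -/
def wtSet {E V : Type*} [AddCommGroup V] [Module ℂ V] (wtSp : E → Submodule ℂ V) :
    Set E :=
  {μ | wtSp μ ≠ ⊥}

/-- The set of weights of a submodule `N`. -/
def wtOf {E V : Type*} [AddCommGroup V] [Module ℂ V] (wtSp : E → Submodule ℂ V)
    (N : Submodule ℂ V) : Set E :=
  {μ | ∃ v ∈ N, v ∈ wtSp μ ∧ v ≠ 0}

/-- The submodule `U(g_J) · v` (spanned by lowering monomials in directions `J`). -/
def genSub {ι V : Type*} [AddCommGroup V] [Module ℂ V] (F : ι → V →ₗ[ℂ] V) (v : V)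
    (J : Set ι) : Submodule ℂ V :=
  Submodule.span ℂ {w | ∃ l : List ι, (∀ i ∈ l, i ∈ J) ∧ w = monom F v l}

/-- The set `J(V^λ)` of integrable simple directions:
`{i : λ(h_i) ∈ ℤ_{≥0}, (x_{α_i}^-)^{λ(h_i)+1} v_λ = 0}`. -/
def integrable {ι E V : Type*} [AddCommGroup V] [Module ℂ V]
    (F : ι → V →ₗ[ℂ] V) (vlam : V) (κ : E → ι → ℂ) (lam : E) : Set ι :=
  {i | ∃ n : ℕ, κ lam i = (n : ℂ) ∧ (F i ^ (n + 1)) vlam = 0}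

/-- `N₀` is a simple module for the subalgebra `g_{I0}`. -/
def IsModSimple {ι V : Type*} [AddCommGroup V] [Module ℂ V] (F Ep : ι → V →ₗ[ℂ] V)
    (I0 : Set ι) (N₀ : Submodule ℂ V) : Prop :=
  ∀ N : Submodule ℂ V, N ≤ N₀ → N ≠ ⊥ →
    (∀ j ∈ I0, ∀ v ∈ N, F j v ∈ N) → (∀ j ∈ I0, ∀ v ∈ N, Ep j v ∈ N) → N = N₀

private lemma monom_mem_wtSp {ι E V : Type*} [AddCommGroup E] [AddCommGroup V] [Module ℂ V]
    {α : ι → E} {lam : E} {wtSp : E → Submodule ℂ V} {F Ep : ι → V →ₗ[ℂ] V}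
    {vlam : V} {κ : E → ι → ℂ} (h : IsHWModule α lam wtSp F Ep vlam κ) :
    ∀ l : List ι, monom F vlam l ∈ wtSp (lam - (l.map α).sum)
  | [] => by simpa [monom] using h.vlam_mem
  | i :: l => by
      have h1 := h.F_wt i _ _ (monom_mem_wtSp h l)
      have heq : lam - (l.map α).sum - α i = lam - ((List.map α (i :: l)).sum) := by
        simp only [List.map_cons, List.sum_cons]; abel
      rw [heq] at h1
      exact h1

private lemma multiset_map_sum_inj {ι E : Type*} [AddCommGroup E] [Module ℝ E] {α : ι → E}
    (hα : LinearIndependent ℝ α) {s t : Multiset ι}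
    (h : (s.map α).sum = (t.map α).sum) : s = t := by
  classical
  have key : ∀ i : ι, s.count i = t.count i := by
    intro i
    set u : Finset ι := s.toFinset ∪ t.toFinset with hu
    have hs : (s.map α).sum = ∑ j ∈ u, s.count j • α j := by
      rw [Finset.sum_multiset_map_count]
      refine Finset.sum_subset (by rw [hu]; exact Finset.subset_union_left) ?_
      intro j _ hj
      have hc : s.count j = 0 :=
        Multiset.count_eq_zero.mpr fun hmem => hj (Multiset.mem_toFinset.mpr hmem)
      simp [hc]
    have ht : (t.map α).sum = ∑ j ∈ u, t.count j • α j := by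
      rw [Finset.sum_multiset_map_count]
      refine Finset.sum_subset (by rw [hu]; exact Finset.subset_union_right) ?_
      intro j _ hj
      have hc : t.count j = 0 :=
        Multiset.count_eq_zero.mpr fun hmem => hj (Multiset.mem_toFinset.mpr hmem)
      simp [hc]
    have hzero : ∑ j ∈ u, ((s.count j : ℝ) - (t.count j : ℝ)) • α j = 0 := by
      have h' : ∑ j ∈ u, s.count j • α j - ∑ j ∈ u, t.count j • α j = 0 := by
        rw [← hs, ← ht, h, sub_self]
      calc ∑ j ∈ u, ((s.count j : ℝ) - (t.count j : ℝ)) • α j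
          = ∑ j ∈ u, ((s.count j : ℝ) • α j - (t.count j : ℝ) • α j) := by
            simp [sub_smul]
        _ = ∑ j ∈ u, s.count j • α j - ∑ j ∈ u, t.count j • α j := by
            rw [Finset.sum_sub_distrib]
            simp [Nat.cast_smul_eq_nsmul]
        _ = 0 := h'
    by_cases hi : i ∈ u
    · have := linearIndependent_iff'.mp hα u
        (fun j => (s.count j : ℝ) - (t.count j : ℝ)) hzero i hi
      have h2 : (s.count i : ℝ) - (t.count i : ℝ) = 0 := this
      have h3 : (s.count i : ℝ) = (t.count i : ℝ) := sub_eq_zero.mp h2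
      exact_mod_cast h3
    · simp only [hu, Finset.mem_union, not_or] at hi
      rw [Multiset.count_eq_zero.mpr fun hmem => hi.1 (Multiset.mem_toFinset.mpr hmem),
        Multiset.count_eq_zero.mpr fun hmem => hi.2 (Multiset.mem_toFinset.mpr hmem)]
  exact Multiset.ext.mpr key

private lemma exists_preimage_multiset {ι E : Type*} (α : ι → E) (J' : Set ι) :
    ∀ m : Multiset E, (∀ y ∈ m, y ∈ α '' J') →
      ∃ m' : Multiset ι, (∀ i ∈ m', i ∈ J') ∧ m'.map α = m := by
  intro m
  induction m using Multiset.induction with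
  | empty => exact fun _ => ⟨0, by simp, by simp⟩
  | cons a m ih =>
      intro hm
      obtain ⟨i, hi, rfl⟩ := hm a (Multiset.mem_cons_self a m)
      obtain ⟨m', hm', rfl⟩ := ih fun y hy => hm y (Multiset.mem_cons_of_mem hy)
      exact ⟨i ::ₘ m', fun j hj => by
        rcases Multiset.mem_cons.mp hj with rfl | hj
        · exact hi
        · exact hm' j hj, by simp⟩

/-- `U(g_J)·v_λ = U(g_{J_min ⊔ (J \ J(V^λ))})·v_λ`, where `J_min ⊆ J(V^λ)`
is the minimal subset with `wt_{J_min ⊔ (J \ J(V^λ))} V^λ = wt_J V^λ`. -/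
theorem genSub_eq_genSub_min {ι E V : Type*} [AddCommGroup E] [Module ℝ E]
    [AddCommGroup V] [Module ℂ V]
    (α : ι → E) (lam : E) (wtSp : E → Submodule ℂ V) (F Ep : ι → V →ₗ[ℂ] V)
    (vlam : V) (κ : E → ι → ℂ)
    (hα : LinearIndependent ℝ α)
    (hHW : IsHWModule α lam wtSp F Ep vlam κ)
    (J Jmin : Set ι) (hminV : Jmin ⊆ integrable F vlam κ lam)
    (hmin : wtJ α lam (wtSet wtSp) (Jmin ∪ (J \ integrable F vlam κ lam))
      = wtJ α lam (wtSet wtSp) J)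
    (hminimal : ∀ K ⊆ integrable F vlam κ lam,
      wtJ α lam (wtSet wtSp) (K ∪ (J \ integrable F vlam κ lam))
        = wtJ α lam (wtSet wtSp) J → Jmin ⊆ K) :
    genSub F vlam J = genSub F vlam (Jmin ∪ (J \ integrable F vlam κ lam)) := by
  classical
  set S := integrable F vlam κ lam with hS
  set J' := Jmin ∪ (J \ S) with hJ'
  have hJminJ : Jmin ⊆ J := by
    have h1 : Jmin ⊆ J ∩ S := hminimal (J ∩ S) Set.inter_subset_right (by
      rw [Set.inter_union_diff])
    exact h1.trans Set.inter_subset_left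
  have hJ'J : J' ⊆ J := Set.union_subset hJminJ Set.diff_subset
  apply le_antisymm
  · rw [genSub, Submodule.span_le]
    rintro w ⟨l, hl, rfl⟩
    by_cases h0 : monom F vlam l = 0
    · rw [h0]; exact Submodule.zero_mem _
    · have hwt := monom_mem_wtSp hHW l
      have hμwt : (lam - (l.map α).sum) ∈ wtSet wtSp := by
        intro hb
        exact h0 (by simpa [hb] using hwt)
      have hcone : (l.map α).sum ∈ nnCone α J := by
        refine AddSubmonoid.list_sum_mem _ ?_
        intro x hx
        obtain ⟨i, hi, rfl⟩ := List.mem_map.mp hx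
        exact AddSubmonoid.subset_closure ⟨i, hl i hi, rfl⟩
      have hμJ : lam - (l.map α).sum ∈ wtJ α lam (wtSet wtSp) J :=
        ⟨hμwt, by rwa [sub_sub_cancel]⟩
      rw [← hmin] at hμJ
      obtain ⟨-, hc'⟩ := hμJ
      rw [sub_sub_cancel] at hc'
      obtain ⟨m, hm, hsum⟩ := AddSubmonoid.exists_multiset_of_mem_closure hc'
      obtain ⟨m', hm', rfl⟩ := exists_preimage_multiset α J' m hm
      have hlm : (l : Multiset ι) = m' := by
        apply multiset_map_sum_inj hα
        rw [Multiset.map_coe, Multiset.sum_coe]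
        exact hsum.symm
      refine Submodule.subset_span ⟨l, ?_, rfl⟩
      intro i hi
      have : i ∈ m' := by
        rw [← hlm]
        exact_mod_cast hi
      exact hm' i this
  · rw [genSub, Submodule.span_le]
    rintro w ⟨l, hl, rfl⟩
    exact Submodule.subset_span ⟨l, fun i hi => hJ'J (hl i hi), rfl⟩
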